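/- For every natural number N with NeZero N and all functions q, k, v, f_q, f_k : ZMod N → ℂ, the second-order Global Context Block output satisfies v ⊙ (f_q ⋆ (q ⊙ (f_k ⋆ k))) = (D_v · C_{f_q} · D_q · C_{f_k}) *ᵥ k, i.e. the gated double convolution of Equation (5) equals the surrogate attention matrix D_v · C_{f_q} · D_q · C_{f_k} applied to the vector k. -/
import Mathlib


/-- Circular convolution: `(z ⋆ u) t = ∑ i, z (t - i) * u i` (Equation (3) of the paper). -/
noncomputable def cconv {N : ℕ} [NeZero N] (z u : ZMod N → ℂ) : ZMod N → ℂ :=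
  fun t => ∑ i : ZMod N, z (t - i) * u i

lemma circ_mulVec {N : ℕ} [NeZero N] (z u : ZMod N → ℂ) :
    (Matrix.circulant z).mulVec u = cconv z u := by
  funext t
  simp [Matrix.mulVec, dotProduct, Matrix.circulant_apply, cconv]

/-- The second-order Global Context Block `v ⊙ (f_q ⋆ (q ⊙ (f_k ⋆ k)))` equals the
surrogate attention matrix `D_v · C_{f_q} · D_q · C_{f_k}` applied to `k`. -/
theorem gcb_eq_surrogate_attention (N : ℕ) [NeZero N] (q k v fq fk : ZMod N → ℂ) :
    (fun t => v t * cconv fq (fun s => q s * cconv fk k s) t)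
      = (Matrix.diagonal v * Matrix.circulant fq * Matrix.diagonal q
          * Matrix.circulant fk).mulVec k := by
  rw [← Matrix.mulVec_mulVec, ← Matrix.mulVec_mulVec, ← Matrix.mulVec_mulVec,
    circ_mulVec fk k,
    show (Matrix.diagonal q).mulVec (cconv fk k) = fun s => q s * cconv fk k s from
      funext fun s => Matrix.mulVec_diagonal _ _ _,
    circ_mulVec]
  funext t
  simp [Matrix.mulVec_diagonal]
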